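/- arXiv:2512.09771 — 2 statements merged into one kernel-verified Lean document; each statement's English description precedes it below -/
import Mathlib

section
/- Let γ be fixed with 63/64 < γ < 1 and let 0 < λ₀ < 1 be a fixed constant. Then ∫_{-Δ}^{Δ} |S₁(t)|² dt ≪ X log³X, where Δ = X^{-12/13} log X. -/
open scoped Classical
open MeasureTheory

/-- The exponential sum `S₁(t) = ∑_{λ₀X < p ≤ X, p = ⌊n^{1/γ}⌋} p^{1-γ} e(tp) log p`
over Piatetski-Shapiro primes of type `γ`. -/
noncomputable def S1 (γ lam₀ X t : ℝ) : ℂ :=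
  ∑ p ∈ Finset.Icc 1 (Nat.floor X),
    if Nat.Prime p ∧ lam₀ * X < (p : ℝ) ∧ (∃ n : ℕ, 0 < n ∧ p = Nat.floor ((n : ℝ) ^ (1/γ))) then
      (((p : ℝ) ^ (1 - γ) * Real.log p : ℝ) : ℂ) *
        Complex.exp (2 * Real.pi * Complex.I * (t * p))
    else 0

namespace PSaux

lemma rpow_gap {β x y : ℝ} (hβ : 1 ≤ β) (hy : 0 < y) (hxy : y ≤ x) :
    (x - y) * y ^ (β - 1) ≤ x ^ β - y ^ β := by
  have hx : 0 < x := hy.trans_le hxy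
  have h1 : x * y ^ (β - 1) ≤ x * x ^ (β - 1) :=
    mul_le_mul_of_nonneg_left (Real.rpow_le_rpow hy.le hxy (by linarith)) hx.le
  have h2 : x * x ^ (β - 1) = x ^ β := by
    nth_rewrite 1 [← Real.rpow_one x]
    rw [← Real.rpow_add hx]; ring_nf
  have h3 : y * y ^ (β - 1) = y ^ β := by
    nth_rewrite 1 [← Real.rpow_one y]
    rw [← Real.rpow_add hy]; ring_nf
  nlinarith [Real.rpow_nonneg hy.le (β - 1)]

lemma sum_inv_le_harm (s : Finset ℕ) (f : ℕ → ℕ) (M : ℕ)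
    (hinj : ∀ x ∈ s, ∀ y ∈ s, f x = f y → x = y)
    (h1 : ∀ q ∈ s, 1 ≤ f q) (hM : ∀ q ∈ s, f q ≤ M) :
    ∑ q ∈ s, (1:ℝ)/(f q) ≤ 1 + Real.log M := by
  have e1 : ∑ q ∈ s, (1:ℝ)/(f q) = ∑ k ∈ s.image f, (1:ℝ)/k :=
    (Finset.sum_image (f := fun k : ℕ => (1:ℝ)/k) hinj).symm
  rw [e1]
  have e2 : ∑ k ∈ s.image f, (1:ℝ)/k ≤ ∑ k ∈ Finset.Icc 1 M, (1:ℝ)/k := by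
    apply Finset.sum_le_sum_of_subset_of_nonneg
    · intro k hk
      obtain ⟨q, hq, rfl⟩ := Finset.mem_image.mp hk
      exact Finset.mem_Icc.mpr ⟨h1 q hq, hM q hq⟩
    · intro k _ _; positivity
  refine e2.trans ?_
  have e3 : ∑ k ∈ Finset.Icc 1 M, (1:ℝ)/k = (harmonic M : ℝ) := by
    rw [harmonic_eq_sum_Icc]; push_cast; simp [one_div]
  rw [e3]
  exact harmonic_le_one_add_log M

/-- The chosen integer witness. -/
noncomputable def psN (γ : ℝ) (p : ℕ) : ℕ :=
  if h : ∃ n : ℕ, 0 < n ∧ p = Nat.floor ((n : ℝ) ^ (1/γ)) then h.choose else 0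

lemma psN_spec {γ : ℝ} {p : ℕ} (h : ∃ n : ℕ, 0 < n ∧ p = Nat.floor ((n : ℝ) ^ (1/γ))) :
    0 < psN γ p ∧ p = Nat.floor ((psN γ p : ℝ) ^ (1/γ)) := by
  rw [psN, dif_pos h]; exact h.choose_spec

lemma rpow_inv_rpow {γ : ℝ} (hγ0 : 0 < γ) {x : ℝ} (hx : 0 ≤ x) :
    (x ^ (1/γ)) ^ γ = x := by
  rw [← Real.rpow_mul hx, one_div, inv_mul_cancel₀ hγ0.ne', Real.rpow_one]

lemma ps_bounds {γ : ℝ} (hγ0 : 0 < γ) {p n : ℕ}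
    (hpn : p = Nat.floor ((n : ℝ) ^ (1/γ))) :
    ((p:ℝ) ≤ (n:ℝ) ^ (1/γ) ∧ (n:ℝ) ^ (1/γ) < (p:ℝ) + 1) ∧
      ((p:ℝ) ^ γ ≤ (n:ℝ) ∧ (n:ℝ) < ((p:ℝ) + 1) ^ γ) := by
  have hv : (0:ℝ) ≤ (n:ℝ) ^ (1/γ) := Real.rpow_nonneg (by positivity) _
  have h1 : (p:ℝ) ≤ (n:ℝ) ^ (1/γ) := by rw [hpn]; exact Nat.floor_le hv
  have h2 : (n:ℝ) ^ (1/γ) < (p:ℝ) + 1 := by rw [hpn]; exact Nat.lt_floor_add_one _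
  have hkey : ((n:ℝ) ^ (1/γ)) ^ γ = (n:ℝ) := rpow_inv_rpow hγ0 (by positivity)
  refine ⟨⟨h1, h2⟩, ?_, ?_⟩
  · calc (p:ℝ) ^ γ ≤ ((n:ℝ) ^ (1/γ)) ^ γ := Real.rpow_le_rpow (by positivity) h1 hγ0.le
    _ = n := hkey
  · calc (n:ℝ) = ((n:ℝ) ^ (1/γ)) ^ γ := hkey.symm
    _ < ((p:ℝ) + 1) ^ γ := Real.rpow_lt_rpow hv h2 hγ0

/-- Kernel bound, off-diagonal. -/
lemma kernel_bound (δ d : ℝ) (hd : d ≠ 0) :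
    ‖∫ t in (-δ)..δ, Complex.exp ((2*Real.pi*Complex.I*d) * t)‖ ≤ 1 / |d| := by
  have hc : (2*Real.pi*Complex.I*(d:ℂ)) ≠ 0 := by
    simp [Complex.ext_iff, Real.pi_ne_zero, hd]
  rw [integral_exp_mul_complex hc, norm_div]
  have h1 : ∀ x : ℝ, ‖Complex.exp ((2*Real.pi*Complex.I*d) * x)‖ = 1 := by
    intro x
    rw [Complex.norm_exp]
    simp [Complex.exp_re]
  have h2 : ‖Complex.exp ((2*Real.pi*Complex.I*d) * δ) -
      Complex.exp ((2*Real.pi*Complex.I*d) * (-δ:ℝ))‖ ≤ 2 := by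
    calc _ ≤ ‖Complex.exp ((2*Real.pi*Complex.I*d) * δ)‖ +
        ‖Complex.exp ((2*Real.pi*Complex.I*d) * (-δ:ℝ))‖ := norm_sub_le _ _
    _ ≤ 2 := by rw [h1, h1]; norm_num
  have h3 : ‖(2*Real.pi*Complex.I*(d:ℂ))‖ = 2*Real.pi*|d| := by
    simp [norm_mul, Complex.norm_real, Real.norm_eq_abs, abs_of_pos Real.pi_pos]
  rw [h3, div_le_div_iff₀ (by positivity) (by positivity)]
  calc _ ≤ 2 * |d| := by nlinarith [abs_nonneg d, abs_pos.mpr hd]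
  _ ≤ 1 * (2*Real.pi*|d|) := by nlinarith [Real.pi_gt_three, abs_nonneg d]

end PSaux

open PSaux

set_option maxHeartbeats 2000000 in
/-- `∫_{-Δ}^{Δ} |S₁(t)|² dt ≪ X log³ X` with `Δ = X^{-12/13} log X`. -/
theorem integral_S1_sq_short (γ lam₀ : ℝ) (hγ : 63/64 < γ) (hγ1 : γ < 1)
    (h0 : 0 < lam₀) (h1 : lam₀ < 1) :
    ∃ C > 0, ∃ X₀ : ℝ, ∀ X ≥ X₀,
      (∫ t in (-(X ^ (-12/13 : ℝ) * Real.log X))..(X ^ (-12/13 : ℝ) * Real.log X),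
        ‖S1 γ lam₀ X t‖ ^ 2) ≤ C * X * (Real.log X) ^ 3 := by
  have hγ0 : (0:ℝ) < γ := by linarith
  refine ⟨4 + 16/lam₀, by positivity, max 8 ((2/lam₀) ^ (1/(1-γ) : ℝ)), ?_⟩
  intro X hX
  have hX8 : (8:ℝ) ≤ X := le_trans (le_max_left _ _) hX
  have hX0 : (0:ℝ) < X := by linarith
  have hX1 : (1:ℝ) ≤ X := by linarith
  -- log X ≥ 2
  have hlog2 : (2:ℝ) ≤ Real.log X := by
    rw [show (2:ℝ) = Real.log (Real.exp 2) from (Real.log_exp 2).symm]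
    apply Real.log_le_log (Real.exp_pos 2)
    have h := Real.exp_one_lt_d9
    have : Real.exp 2 = Real.exp 1 * Real.exp 1 := by
      rw [← Real.exp_add]; norm_num
    nlinarith [Real.exp_pos 1]
  have hlog0 : (0:ℝ) < Real.log X := by linarith
  -- the spacing D
  set D : ℝ := lam₀ * X ^ ((1:ℝ) - γ) with hDdef
  have hXpow_pos : (0:ℝ) < X ^ ((1:ℝ)-γ) := Real.rpow_pos_of_pos hX0 _
  have hD2 : (2:ℝ) ≤ D := by
    have hbase : (0:ℝ) < 2/lam₀ := by positivity
    have h2' : (2/lam₀) ^ ((1/(1-γ)) : ℝ) ≤ X := le_trans (le_max_right _ _) hX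
    have h3' : ((2/lam₀) ^ ((1/(1-γ)) : ℝ)) ^ ((1:ℝ)-γ) ≤ X ^ ((1:ℝ)-γ) :=
      Real.rpow_le_rpow (by positivity) h2' (by linarith)
    have h4' : ((2/lam₀) ^ ((1/(1-γ)) : ℝ)) ^ ((1:ℝ)-γ) = 2/lam₀ :=
      rpow_inv_rpow (by linarith) hbase.le
    rw [h4'] at h3'
    rw [hDdef]
    rw [div_le_iff₀ h0] at h3'
    linarith [mul_le_mul_of_nonneg_left h3' h0.le, h3']
  have hD0 : (0:ℝ) < D := by linarith
  -- basic objects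
  set δ : ℝ := X ^ (-12/13 : ℝ) * Real.log X with hδdef
  have hδ0 : (0:ℝ) ≤ δ := by positivity
  set A : ℝ := X ^ ((1:ℝ)-γ) * Real.log X with hAdef
  have hA0 : (0:ℝ) ≤ A := by positivity
  set P : Finset ℕ := (Finset.Icc 1 (Nat.floor X)).filter
      (fun p => Nat.Prime p ∧ lam₀ * X < (p : ℝ) ∧
        ∃ n : ℕ, 0 < n ∧ p = Nat.floor ((n : ℝ) ^ (1/γ))) with hPdef
  set a : ℕ → ℝ := fun p => (p:ℝ) ^ ((1:ℝ)-γ) * Real.log p with hadef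
  set N : ℕ → ℕ := psN γ with hNdef
  set M : ℕ := Nat.floor (2 * X ^ γ) with hMdef
  -- membership facts
  have hmem : ∀ p ∈ P, Nat.Prime p ∧ lam₀ * X < (p:ℝ) ∧ 0 < N p ∧
      p = Nat.floor ((N p : ℝ) ^ (1/γ)) ∧ (p:ℝ) ≤ X := by
    intro p hp
    rw [hPdef, Finset.mem_filter, Finset.mem_Icc] at hp
    obtain ⟨⟨_h1p, h2p⟩, hprime, hlx, hex⟩ := hp
    have hspec := psN_spec (γ := γ) hex
    exact ⟨hprime, hlx, hspec.1, hspec.2,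
      le_trans (Nat.cast_le.mpr h2p) (Nat.floor_le hX0.le)⟩
  have hp1 : ∀ p ∈ P, (1:ℝ) ≤ (p:ℝ) := by
    intro p hp
    exact_mod_cast (hmem p hp).1.one_lt.le
  have ha_nonneg : ∀ p ∈ P, 0 ≤ a p := by
    intro p hp
    have := hp1 p hp
    apply mul_nonneg (Real.rpow_nonneg (by positivity) _) (Real.log_nonneg this)
  have haA : ∀ p ∈ P, a p ≤ A := by
    intro p hp
    obtain ⟨_, _, _, _, hpX⟩ := hmem p hp
    have h1' : (p:ℝ) ^ ((1:ℝ)-γ) ≤ X ^ ((1:ℝ)-γ) :=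
      Real.rpow_le_rpow (by positivity) hpX (by linarith)
    have h2' : Real.log p ≤ Real.log X := Real.log_le_log (by linarith [hp1 p hp]) hpX
    have := hp1 p hp
    apply mul_le_mul h1' h2' (Real.log_nonneg this) (by positivity)
  have hN1 : ∀ p ∈ P, 1 ≤ N p := fun p hp => (hmem p hp).2.2.1
  have hNleM : ∀ p ∈ P, N p ≤ M := by
    intro p hp
    obtain ⟨_, _, _, hfloor, hpX⟩ := hmem p hp
    have hb := (ps_bounds hγ0 hfloor).2.2
    have h2X : ((p:ℝ) + 1) ≤ 2 * X := by linarith [hp1 p hp]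
    have h3' : ((p:ℝ)+1) ^ γ ≤ (2*X) ^ γ :=
      Real.rpow_le_rpow (by positivity) h2X hγ0.le
    have h4' : ((2:ℝ)*X) ^ γ = 2 ^ γ * X ^ γ := Real.mul_rpow (by norm_num) hX0.le
    have h5' : (2:ℝ) ^ γ ≤ 2 := by
      nth_rewrite 2 [show (2:ℝ) = 2 ^ (1:ℝ) from (Real.rpow_one 2).symm]
      exact Real.rpow_le_rpow_of_exponent_le one_le_two hγ1.le
    have h6' : (N p : ℝ) ≤ 2 * X ^ γ := by
      have hXγ : (0:ℝ) ≤ X ^ γ := Real.rpow_nonneg hX0.le _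
      nlinarith [hb]
    exact Nat.le_floor h6'
  have hNinj : ∀ p ∈ P, ∀ q ∈ P, N p = N q → p = q := by
    intro p hp q hq hpq
    have h1' := (hmem p hp).2.2.2.1
    have h2' := (hmem q hq).2.2.2.1
    rw [h1', h2', hpq]
  -- the gap estimate
  have hgap : ∀ p ∈ P, ∀ q ∈ P, N p < N q →
      ((N q - N p : ℕ):ℝ) * D - 1 ≤ (q:ℝ) - p := by
    intro p hp q hq hlt
    obtain ⟨_, hlx, hNpos, hfloor, _⟩ := hmem p hp
    obtain ⟨_, _, _, hfloor', _⟩ := hmem q hq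
    have hb := (ps_bounds hγ0 hfloor)
    have hb' := (ps_bounds hγ0 hfloor')
    have hβ : 1 ≤ 1/γ := by rw [le_div_iff₀ hγ0]; linarith
    have hNp0 : (0:ℝ) < (N p : ℝ) := by exact_mod_cast hNpos
    have hNple : (N p : ℝ) ≤ (N q : ℝ) := by exact_mod_cast hlt.le
    have key := rpow_gap (x := (N q:ℝ)) (y := (N p:ℝ)) hβ hNp0 hNple
    have hlam0X : (0:ℝ) < lam₀ * X := by positivity
    have h5 : (lam₀ * X) ^ γ ≤ (N p : ℝ) :=
      le_trans (Real.rpow_le_rpow hlam0X.le hlx.le hγ0.le) hb.2.1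
    have h6 : D ≤ (N p:ℝ) ^ (1/γ - 1) := by
      have e1 : ((lam₀ * X) ^ γ) ^ (1/γ - 1) ≤ (N p:ℝ) ^ (1/γ - 1) :=
        Real.rpow_le_rpow (by positivity) h5 (by linarith)
      have e2 : ((lam₀ * X) ^ γ) ^ ((1/γ - 1):ℝ) = (lam₀ * X) ^ ((1:ℝ) - γ) := by
        rw [← Real.rpow_mul hlam0X.le]
        congr 1
        field_simp
      have e3 : (lam₀*X) ^ ((1:ℝ)-γ) = lam₀^((1:ℝ)-γ) * X^((1:ℝ)-γ) :=
        Real.mul_rpow h0.le hX0.le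
      have e4 : lam₀ ≤ lam₀ ^ ((1:ℝ)-γ) := by
        nth_rewrite 1 [← Real.rpow_one lam₀]
        exact Real.rpow_le_rpow_of_exponent_ge h0 h1.le (by linarith)
      have e5 : (0:ℝ) ≤ X^((1:ℝ)-γ) := hXpow_pos.le
      calc D = lam₀ * X^((1:ℝ)-γ) := hDdef
        _ ≤ lam₀^((1:ℝ)-γ) * X^((1:ℝ)-γ) := mul_le_mul_of_nonneg_right e4 e5
        _ = (lam₀*X)^((1:ℝ)-γ) := e3.symm
        _ = ((lam₀ * X) ^ γ) ^ ((1/γ - 1):ℝ) := e2.symm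
        _ ≤ _ := e1
    have hc1 : (N q:ℝ)^(1/γ : ℝ) - 1 ≤ (q:ℝ) := by
      have := hb'.1.2
      linarith
    have hc2 : (p:ℝ) ≤ (N p:ℝ)^(1/γ : ℝ) := hb.1.1
    have hsub : ((N q - N p : ℕ):ℝ) = (N q:ℝ) - (N p:ℝ) := by
      rw [Nat.cast_sub hlt.le]
    rw [hsub]
    have hmul : ((N q:ℝ) - N p) * D ≤ ((N q:ℝ) - N p) * (N p:ℝ)^(1/γ - 1) :=
      mul_le_mul_of_nonneg_left h6 (by linarith)
    linarith [key, hc1, hc2, hmul]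
  -- distance lower bound, both-sided, for q ∈ P.erase p
  have hdist : ∀ p ∈ P, ∀ q ∈ P.erase p,
      1 ≤ (max (N q - N p) (N p - N q) : ℕ) ∧ (max (N q - N p) (N p - N q) : ℕ) ≤ M ∧
      ((max (N q - N p) (N p - N q) : ℕ):ℝ) * D / 2 ≤ |(q:ℝ) - p| ∧ (0:ℝ) < |(q:ℝ) - p| := by
    intro p hp q hq'
    have hqne : q ≠ p := Finset.ne_of_mem_erase hq'
    have hq : q ∈ P := Finset.mem_of_mem_erase hq'
    have hNne : N q ≠ N p := fun h => hqne (hNinj q hq p hp h)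
    rcases lt_or_gt_of_ne hNne with hlt | hgt
    · -- N q < N p; distance = N p - N q
      have hk1 : 1 ≤ N p - N q := by omega
      have hkmax : max (N q - N p) (N p - N q) = N p - N q := by omega
      have hkM : N p - N q ≤ M := le_trans (Nat.sub_le _ _) (hNleM p hp)
      have hg := hgap q hq p hp hlt
      have hkD : (1:ℝ) ≤ ((N p - N q : ℕ):ℝ) * D / 2 := by
        have hk' : (1:ℝ) ≤ ((N p - N q : ℕ):ℝ) := by exact_mod_cast hk1
        have h2 := mul_le_mul hk' hD2 (by norm_num) (zero_le_one.trans hk')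
        linarith
      have habs : ((N p - N q:ℕ):ℝ) * D / 2 ≤ |(q:ℝ) - p| := by
        have h7 : ((N p - N q:ℕ):ℝ) * D / 2 ≤ (p:ℝ) - q := by linarith
        rw [abs_sub_comm]
        calc ((N p - N q:ℕ):ℝ) * D / 2 ≤ (p:ℝ) - q := h7
          _ ≤ |(p:ℝ) - q| := le_abs_self _
      rw [hkmax]
      exact ⟨hk1, hkM, habs, lt_of_lt_of_le (by linarith) habs⟩
    · have hk1 : 1 ≤ N q - N p := by omega
      have hkmax : max (N q - N p) (N p - N q) = N q - N p := by omega
      have hkM : N q - N p ≤ M := le_trans (Nat.sub_le _ _) (hNleM q hq)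
      have hg := hgap p hp q hq hgt
      have hkD : (1:ℝ) ≤ ((N q - N p : ℕ):ℝ) * D / 2 := by
        have hk' : (1:ℝ) ≤ ((N q - N p : ℕ):ℝ) := by exact_mod_cast hk1
        have h2 := mul_le_mul hk' hD2 (by norm_num) (zero_le_one.trans hk')
        linarith
      have habs : ((N q - N p:ℕ):ℝ) * D / 2 ≤ |(q:ℝ) - p| := by
        have h7 : ((N q - N p:ℕ):ℝ) * D / 2 ≤ (q:ℝ) - p := by linarith
        calc ((N q - N p:ℕ):ℝ) * D / 2 ≤ (q:ℝ) - p := h7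
          _ ≤ |(q:ℝ) - p| := le_abs_self _
      rw [hkmax]
      exact ⟨hk1, hkM, habs, lt_of_lt_of_le (by linarith) habs⟩
  -- harmonic sum over erase
  have hinner : ∀ p ∈ P, ∑ q ∈ P.erase p, 1/|(q:ℝ) - p| ≤
      (2/D) * (2 * (1 + Real.log M)) := by
    intro p hp
    set K : ℕ → ℕ := fun q => max (N q - N p) (N p - N q) with hKdef
    have hKx : ∀ q, K q = max (N q - N p) (N p - N q) := fun q => rfl
    have hterm : ∀ q ∈ P.erase p, 1/|(q:ℝ) - p| ≤ (2/D) * (1/(K q : ℝ)) := by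
      intro q hq
      obtain ⟨hk1, _, habs, hpos⟩ := hdist p hp q hq
      have hK0 : (0:ℝ) < (K q : ℝ) := by exact_mod_cast hk1
      have hrhs : (2/D) * (1/(K q:ℝ)) = 2 / (D * (K q:ℝ)) := by
        field_simp
      rw [hrhs, div_le_div_iff₀ hpos (by positivity)]
      nlinarith [habs, hK0, hD0]
    calc ∑ q ∈ P.erase p, 1/|(q:ℝ) - p| ≤ ∑ q ∈ P.erase p, (2/D) * (1/(K q:ℝ)) :=
        Finset.sum_le_sum hterm
      _ = (2/D) * ∑ q ∈ P.erase p, 1/(K q:ℝ) := by rw [Finset.mul_sum]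
      _ ≤ (2/D) * (2 * (1 + Real.log M)) := by
        apply mul_le_mul_of_nonneg_left _ (by positivity)
        -- split into the two monotonicity classes
        rw [← Finset.sum_filter_add_sum_filter_not (P.erase p) (fun q => N p < N q)]
        have hplus : ∑ q ∈ (P.erase p).filter (fun q => N p < N q), 1/(K q:ℝ) ≤
            1 + Real.log M := by
          apply sum_inv_le_harm _ K M
          · intro x hx y hy hxy
            rw [Finset.mem_filter] at hx hy
            have hxe := hx.2; have hye := hy.2
            have hx' : K x = N x - N p := by rw [hKx]; omega
            have hy' : K y = N y - N p := by rw [hKx]; omega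
            rw [hx', hy'] at hxy
            exact hNinj x (Finset.mem_of_mem_erase hx.1) y (Finset.mem_of_mem_erase hy.1)
              (by omega)
          · intro q hq
            rw [Finset.mem_filter] at hq
            exact (hdist p hp q hq.1).1
          · intro q hq
            rw [Finset.mem_filter] at hq
            exact (hdist p hp q hq.1).2.1
        have hminus : ∑ q ∈ (P.erase p).filter (fun q => ¬ N p < N q), 1/(K q:ℝ) ≤
            1 + Real.log M := by
          apply sum_inv_le_harm _ K M
          · intro x hx y hy hxy
            rw [Finset.mem_filter] at hx hy
            have hxE := Finset.mem_of_mem_erase hx.1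
            have hyE := Finset.mem_of_mem_erase hy.1
            have hxne : N x ≠ N p := fun h => (Finset.ne_of_mem_erase hx.1) (hNinj x hxE p hp h)
            have hyne : N y ≠ N p := fun h => (Finset.ne_of_mem_erase hy.1) (hNinj y hyE p hp h)
            have hx' : K x = N p - N x := by rw [hKx]; omega
            have hy' : K y = N p - N y := by rw [hKx]; omega
            rw [hx', hy'] at hxy
            have hxlt : N x < N p := by omega
            have hylt : N y < N p := by omega
            exact hNinj x hxE y hyE (by omega)
          · intro q hq
            rw [Finset.mem_filter] at hq
            exact (hdist p hp q hq.1).1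
          · intro q hq
            rw [Finset.mem_filter] at hq
            exact (hdist p hp q hq.1).2.1
        linarith
  -- cardinality
  have hM2 : 2 ≤ M := by
    have hXγ1 : (1:ℝ) ≤ X ^ γ := Real.one_le_rpow hX1 hγ0.le
    exact_mod_cast Nat.le_floor (by push_cast; linarith : (2:ℝ) ≤ 2 * X ^ γ)
  have hcard : (P.card : ℝ) ≤ 2 * X ^ γ := by
    have h1' : P.card = (P.image N).card :=
      (Finset.card_image_of_injOn (fun x hx y hy => hNinj x hx y hy)).symm
    have h2' : P.image N ⊆ Finset.Icc 1 M := by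
      intro k hk
      obtain ⟨p, hp, rfl⟩ := Finset.mem_image.mp hk
      exact Finset.mem_Icc.mpr ⟨hN1 p hp, hNleM p hp⟩
    have h3' : P.card ≤ M := by
      rw [h1']
      calc (P.image N).card ≤ (Finset.Icc 1 M).card := Finset.card_le_card h2'
        _ = M := by rw [Nat.card_Icc]; omega
    calc (P.card : ℝ) ≤ (M:ℝ) := by exact_mod_cast h3'
      _ ≤ 2 * X ^ γ := Nat.floor_le (by positivity)
  -- log M bound
  have hlogM : 1 + Real.log M ≤ 2 * Real.log X := by
    have hM0 : (0:ℝ) < (M:ℝ) := by exact_mod_cast (by omega : 0 < M)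
    have h1' : Real.log M ≤ Real.log (2 * X ^ γ) :=
      Real.log_le_log hM0 (Nat.floor_le (by positivity))
    have h2' : Real.log (2 * X ^ γ) = Real.log 2 + γ * Real.log X := by
      rw [Real.log_mul (by norm_num) (by positivity), Real.log_rpow hX0]
    have h3' : Real.log 2 < 1 := lt_trans Real.log_two_lt_d9 (by norm_num)
    have h4' : γ * Real.log X ≤ Real.log X := by nlinarith
    linarith
  -- now the integral
  set c : ℕ → ℝ → ℂ := fun p t =>
    (((p:ℝ) ^ ((1:ℝ)-γ) * Real.log p : ℝ) : ℂ) * Complex.exp (2 * Real.pi * Complex.I * (t * p))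
    with hcdef
  have hS1 : ∀ t, S1 γ lam₀ X t = ∑ p ∈ P, c p t := by
    intro t
    rw [S1, hPdef]
    exact (Finset.sum_filter _ _).symm
  set g : ℕ → ℕ → ℝ → ℂ := fun p q t =>
    (((a p * a q : ℝ)) : ℂ) * Complex.exp ((2 * Real.pi * Complex.I * ((((p:ℝ) - (q:ℝ)) : ℝ) : ℂ)) * t)
    with hgdef
  have hgcont : ∀ p q, Continuous (g p q) := by
    intro p q
    apply Continuous.mul continuous_const
    apply Complex.continuous_exp.comp
    exact continuous_const.mul Complex.continuous_ofReal
  have hprod : ∀ t, S1 γ lam₀ X t * (starRingEnd ℂ) (S1 γ lam₀ X t) =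
      ∑ p ∈ P, ∑ q ∈ P, g p q t := by
    intro t
    rw [hS1 t, map_sum, Finset.sum_mul_sum]
    apply Finset.sum_congr rfl
    intro p _
    apply Finset.sum_congr rfl
    intro q _
    rw [hcdef, hgdef]
    simp only
    rw [map_mul, ← Complex.exp_conj]
    have hconj : (starRingEnd ℂ) (2 * (Real.pi:ℂ) * Complex.I * ((t:ℝ) * (q:ℕ))) =
        -(2 * (Real.pi:ℂ) * Complex.I * ((t:ℝ) * (q:ℕ))) := by
      simp only [map_mul, Complex.conj_I, Complex.conj_ofReal, map_ofNat,
        Complex.conj_natCast]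
      ring
    rw [hconj, Complex.conj_ofReal]
    rw [mul_mul_mul_comm, ← Complex.exp_add]
    rw [hadef]
    push_cast
    ring_nf
  have hsq : ∀ t, ‖S1 γ lam₀ X t‖ ^ 2 = (∑ p ∈ P, ∑ q ∈ P, g p q t).re := by
    intro t
    rw [← hprod t, Complex.mul_conj, Complex.ofReal_re, Complex.normSq_eq_norm_sq]
  -- swap integral and sums
  have hswap : (∫ t in (-δ)..δ, ‖S1 γ lam₀ X t‖ ^ 2) =
      ∑ p ∈ P, ∑ q ∈ P, (∫ t in (-δ)..δ, g p q t).re := by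
    rw [intervalIntegral.integral_congr (g := fun t => (∑ p ∈ P, ∑ q ∈ P, g p q t).re)
      (fun t _ => hsq t)]
    have hF : Continuous (fun t => ∑ p ∈ P, ∑ q ∈ P, g p q t) :=
      continuous_finset_sum _ (fun p _ => continuous_finset_sum _ (fun q _ => hgcont p q))
    have h1' := Complex.reCLM.intervalIntegral_comp_comm
      (hF.intervalIntegrable (μ := volume) (-δ) δ)
    simp only [Complex.reCLM_apply] at h1'
    rw [h1']
    have h2' : (∫ t in (-δ)..δ, (∑ p ∈ P, ∑ q ∈ P, g p q t)) =
        ∑ p ∈ P, ∑ q ∈ P, ∫ t in (-δ)..δ, g p q t := by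
      rw [intervalIntegral.integral_finset_sum
        (fun p _ => (continuous_finset_sum _
          (fun q _ => hgcont p q)).intervalIntegrable (-δ) δ)]
      exact Finset.sum_congr rfl (fun p _ => intervalIntegral.integral_finset_sum
        (fun q _ => (hgcont p q).intervalIntegrable (-δ) δ))
    rw [h2']
    simp [Complex.re_sum]
  -- bound each term
  have hterm : ∀ p ∈ P, ∀ q ∈ P, (∫ t in (-δ)..δ, g p q t).re ≤
      if p = q then 2 * δ * (a p * a p) else a p * a q / |(p:ℝ) - q| := by
    intro p hp q hq
    by_cases hpq : p = q
    · subst hpq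
      rw [if_pos rfl]
      have : ∀ t : ℝ, g p p t = (((a p * a p : ℝ)) : ℂ) := by
        intro t
        rw [hgdef]
        simp only [sub_self, Complex.ofReal_zero, mul_zero, zero_mul, Complex.exp_zero,
          mul_one]
      rw [intervalIntegral.integral_congr (fun t _ => this t)]
      rw [intervalIntegral.integral_const]
      have h2δ : ((δ - -δ) • ((((a p * a p : ℝ))) : ℂ)).re = 2 * δ * (a p * a p) := by
        rw [Complex.real_smul, ← Complex.ofReal_mul, Complex.ofReal_re]
        ring
      rw [h2δ]
    · rw [if_neg hpq]
      have hd : ((p:ℝ) - q) ≠ 0 := by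
        intro h
        apply hpq
        exact_mod_cast (by linarith [sub_eq_zero.mp h] : (p:ℝ) = q)
      calc (∫ t in (-δ)..δ, g p q t).re ≤ ‖∫ t in (-δ)..δ, g p q t‖ :=
          Complex.re_le_norm _
        _ ≤ a p * a q / |(p:ℝ) - q| := by
          rw [hgdef]
          simp only
          rw [intervalIntegral.integral_const_mul, norm_mul]
          have h1' : ‖(((a p * a q : ℝ)) : ℂ)‖ = a p * a q := by
            rw [Complex.norm_real, Real.norm_eq_abs,
              abs_of_nonneg (mul_nonneg (ha_nonneg p hp) (ha_nonneg q hq))]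
          rw [h1', div_eq_mul_inv, ← one_div]
          apply mul_le_mul_of_nonneg_left (kernel_bound δ _ hd)
            (mul_nonneg (ha_nonneg p hp) (ha_nonneg q hq))
  -- assemble
  have hmain : (∫ t in (-δ)..δ, ‖S1 γ lam₀ X t‖ ^ 2) ≤
      ∑ p ∈ P, (2 * δ * (a p * a p) + ∑ q ∈ P.erase p, a p * a q / |(p:ℝ) - q|) := by
    rw [hswap]
    apply Finset.sum_le_sum
    intro p hp
    have hsplit : ∑ q ∈ P, (∫ t in (-δ)..δ, g p q t).re =
        (∫ t in (-δ)..δ, g p p t).re + ∑ q ∈ P.erase p, (∫ t in (-δ)..δ, g p q t).re :=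
      (Finset.add_sum_erase P _ hp).symm
    rw [hsplit]
    have h1' : (∫ t in (-δ)..δ, g p p t).re ≤ 2 * δ * (a p * a p) := by
      have := hterm p hp p hp
      rwa [if_pos rfl] at this
    have h2' : ∑ q ∈ P.erase p, (∫ t in (-δ)..δ, g p q t).re ≤
        ∑ q ∈ P.erase p, a p * a q / |(p:ℝ) - q| := by
      apply Finset.sum_le_sum
      intro q hq
      have hqP : q ∈ P := Finset.mem_of_mem_erase hq
      have := hterm p hp q hqP
      rwa [if_neg (Finset.ne_of_mem_erase hq).symm] at this
    linarith
  -- bound the right-hand side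
  have hE : ∀ p ∈ P, 2 * δ * (a p * a p) + ∑ q ∈ P.erase p, a p * a q / |(p:ℝ) - q| ≤
      a p * (2 * δ * A + A * ((2/D) * (2 * (1 + Real.log M)))) := by
    intro p hp
    have hap := ha_nonneg p hp
    have h1' : 2 * δ * (a p * a p) ≤ a p * (2 * δ * A) := by
      have h := mul_le_mul_of_nonneg_left
        (mul_le_mul_of_nonneg_left (haA p hp) hap) (by positivity : (0:ℝ) ≤ 2*δ)
      linarith [h]
    have h2' : ∑ q ∈ P.erase p, a p * a q / |(p:ℝ) - q| ≤
        a p * (A * ((2/D) * (2 * (1 + Real.log M)))) := by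
      have hstep : ∀ q ∈ P.erase p, a p * a q / |(p:ℝ) - q| ≤
          a p * A * (1/|(q:ℝ) - p|) := by
        intro q hq
        have hqP : q ∈ P := Finset.mem_of_mem_erase hq
        have habs : |(p:ℝ) - q| = |(q:ℝ) - p| := abs_sub_comm _ _
        have hpos := (hdist p hp q hq).2.2.2
        rw [habs, div_eq_mul_inv, ← one_div]
        have haq := ha_nonneg q hqP
        have hAq := haA q hqP
        have hinv : (0:ℝ) ≤ 1/|(q:ℝ) - p| := by positivity
        exact mul_le_mul_of_nonneg_right (mul_le_mul_of_nonneg_left hAq hap) hinv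
      calc ∑ q ∈ P.erase p, a p * a q / |(p:ℝ) - q| ≤
          ∑ q ∈ P.erase p, a p * A * (1/|(q:ℝ) - p|) := Finset.sum_le_sum hstep
        _ = a p * A * ∑ q ∈ P.erase p, 1/|(q:ℝ) - p| := by rw [Finset.mul_sum]
        _ ≤ a p * A * ((2/D) * (2 * (1 + Real.log M))) := by
          apply mul_le_mul_of_nonneg_left (hinner p hp) (by positivity)
        _ = a p * (A * ((2/D) * (2 * (1 + Real.log M)))) := by ring
    linarith
  -- numeric conclusion
  have hEbound : 2 * δ * A + A * ((2/D) * (2 * (1 + Real.log M))) ≤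
      (2 + 8/lam₀) * (Real.log X) ^ 2 := by
    have hδA : 2 * δ * A ≤ 2 * (Real.log X) ^ 2 := by
      rw [hδdef, hAdef]
      have hcollapse : X ^ (-12/13 : ℝ) * X ^ ((1:ℝ)-γ) = X ^ ((-12/13 : ℝ) + ((1:ℝ)-γ)) :=
        (Real.rpow_add hX0 _ _).symm
      have hle1 : X ^ ((-12/13 : ℝ) + ((1:ℝ)-γ)) ≤ 1 :=
        Real.rpow_le_one_of_one_le_of_nonpos hX1 (by linarith)
      have hpos2 : (0:ℝ) ≤ Real.log X * Real.log X := mul_nonneg hlog0.le hlog0.le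
      have hmm : X ^ (-12/13 : ℝ) * X ^ ((1:ℝ)-γ) ≤ 1 := by rw [hcollapse]; exact hle1
      nlinarith [mul_le_mul_of_nonneg_right hmm hpos2]
    have hAD : A * (2/D) = 2 * Real.log X / lam₀ := by
      rw [hAdef, hDdef]
      field_simp
    have hA2 : A * ((2/D) * (2 * (1 + Real.log M))) ≤ (8/lam₀) * (Real.log X)^2 := by
      have h1' : A * ((2/D) * (2 * (1 + Real.log M))) =
          (A * (2/D)) * (2 * (1 + Real.log M)) := by ring
      rw [h1', hAD]
      have h2' : 2 * (1 + Real.log M) ≤ 4 * Real.log X := by linarith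
      have h3' : (0:ℝ) ≤ 2 * Real.log X / lam₀ := by positivity
      calc 2 * Real.log X / lam₀ * (2 * (1 + Real.log M)) ≤
          2 * Real.log X / lam₀ * (4 * Real.log X) := mul_le_mul_of_nonneg_left h2' h3'
        _ = (8/lam₀) * (Real.log X)^2 := by ring
    linarith
  have hsum_a : ∑ p ∈ P, a p ≤ 2 * X * Real.log X := by
    have h1' : ∑ p ∈ P, a p ≤ P.card • A := Finset.sum_le_card_nsmul P a A haA
    rw [nsmul_eq_mul] at h1'
    have h2' : (P.card : ℝ) * A ≤ (2 * X ^ γ) * A := mul_le_mul_of_nonneg_right hcard hA0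
    have h3' : (2 * X ^ γ) * A = 2 * X * Real.log X := by
      rw [hAdef]
      have : X ^ γ * X ^ ((1:ℝ)-γ) = X := by
        rw [← Real.rpow_add hX0]
        norm_num
      calc (2 * X ^ γ) * (X ^ ((1:ℝ)-γ) * Real.log X)
          = 2 * (X ^ γ * X ^ ((1:ℝ)-γ)) * Real.log X := by ring
        _ = 2 * X * Real.log X := by rw [this]
    linarith
  calc (∫ t in (-δ)..δ, ‖S1 γ lam₀ X t‖ ^ 2) ≤
      ∑ p ∈ P, (2 * δ * (a p * a p) + ∑ q ∈ P.erase p, a p * a q / |(p:ℝ) - q|) := hmain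
    _ ≤ ∑ p ∈ P, a p * ((2 + 8/lam₀) * (Real.log X) ^ 2) := by
      apply Finset.sum_le_sum
      intro p hp
      calc 2 * δ * (a p * a p) + ∑ q ∈ P.erase p, a p * a q / |(p:ℝ) - q| ≤
          a p * (2 * δ * A + A * ((2/D) * (2 * (1 + Real.log M)))) := hE p hp
        _ ≤ a p * ((2 + 8/lam₀) * (Real.log X) ^ 2) :=
          mul_le_mul_of_nonneg_left hEbound (ha_nonneg p hp)
    _ = (∑ p ∈ P, a p) * ((2 + 8/lam₀) * (Real.log X) ^ 2) := by rw [Finset.sum_mul]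
    _ ≤ (2 * X * Real.log X) * ((2 + 8/lam₀) * (Real.log X) ^ 2) := by
      apply mul_le_mul_of_nonneg_right hsum_a (by positivity)
    _ ≤ (4 + 16/lam₀) * X * (Real.log X) ^ 3 := by
      have : (2 * X * Real.log X) * ((2 + 8/lam₀) * (Real.log X) ^ 2) =
          (4 + 16/lam₀) * X * (Real.log X) ^ 3 := by ring
      rw [this]
end

section
/- Let γ be fixed with 63/64 < γ < 1, let 0 < λ₀ < 1 be fixed, and let λ₁, λ₂, λ₃ be nonzero real numbers. Then ∫_{-Δ}^{Δ} |S₁(λ₁ t)| · |S₁(λ₂ t)| · |U(λ₃ t) - I₂(λ₃ t)| dt ≪ Δ X² log³X, where Δ = X^{-12/13} log X. -/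
open scoped Classical
open MeasureTheory

section AuxLemmas


lemma aux_one_sub_cos (x : ℝ) : 1 - Real.cos x ≤ x^2/2 := by
  have h1 : Real.cos (2*(x/2)) = Real.cos (x/2)^2 - Real.sin (x/2)^2 := Real.cos_two_mul' _
  have h2 : Real.cos (x/2)^2 = 1 - Real.sin (x/2)^2 := Real.cos_sq' _
  rw [show 2*(x/2) = x by ring] at h1
  have hs : Real.sin (x/2)^2 ≤ (x/2)^2 := by
    have h3 := Real.abs_sin_le_abs (x := x/2)
    calc Real.sin (x/2)^2 = |Real.sin (x/2)|^2 := (sq_abs _).symm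
      _ ≤ |x/2|^2 := by exact pow_le_pow_left₀ (abs_nonneg _) h3 2
      _ = (x/2)^2 := sq_abs _
  nlinarith

lemma aux_norm_exp_I_sub_one (b : ℝ) : ‖Complex.exp (↑b * Complex.I) - 1‖ ≤ |b| := by
  have hz : Complex.exp (↑b * Complex.I) - 1
      = Complex.ofReal (Real.cos b - 1) + Complex.ofReal (Real.sin b) * Complex.I := by
    rw [Complex.exp_mul_I]; push_cast; ring
  rw [hz, Complex.norm_add_mul_I]
  have h1 : (Real.cos b - 1)^2 + (Real.sin b)^2 ≤ b^2 := by
    have h2 : (Real.sin b)^2 = 1 - (Real.cos b)^2 := Real.sin_sq b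
    have := aux_one_sub_cos b
    nlinarith
  calc Real.sqrt ((Real.cos b - 1)^2 + (Real.sin b)^2) ≤ Real.sqrt (b^2) :=
        Real.sqrt_le_sqrt h1
    _ = |b| := Real.sqrt_sq_eq_abs b

lemma aux_key (a b : ℝ) :
    ‖Complex.exp (↑b * Complex.I) * (2 * (Real.cos a : ℂ)) - 2‖ ≤ 2 * |b| + a^2 := by
  have hfac : Complex.exp (↑b * Complex.I) * (2 * (Real.cos a : ℂ)) - 2
      = 2 * (Real.cos a : ℂ) * (Complex.exp (↑b * Complex.I) - 1)
        + 2 * ((Real.cos a : ℂ) - 1) := by ring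
  rw [hfac]
  have h1 : ‖2 * (Real.cos a : ℂ) * (Complex.exp (↑b * Complex.I) - 1)‖ ≤ 2 * |b| := by
    rw [norm_mul, norm_mul]
    have hc : ‖(Real.cos a : ℂ)‖ ≤ 1 := by
      rw [Complex.norm_real, Real.norm_eq_abs]; exact Real.abs_cos_le_one a
    have := aux_norm_exp_I_sub_one b
    have h2 : ‖(2:ℂ)‖ = 2 := by norm_num
    rw [h2]
    nlinarith [norm_nonneg ((Real.cos a : ℂ)), norm_nonneg (Complex.exp (↑b * Complex.I) - 1), abs_nonneg b]
  have h2 : ‖2 * ((Real.cos a : ℂ) - 1)‖ ≤ a^2 := by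
    have : ((Real.cos a : ℂ) - 1) = Complex.ofReal (Real.cos a - 1) := by push_cast; ring
    rw [this, norm_mul, Complex.norm_real, Real.norm_eq_abs,
      abs_of_nonpos (by nlinarith [Real.cos_le_one a] : Real.cos a - 1 ≤ 0)]
    have := aux_one_sub_cos a
    have h2 : ‖(2:ℂ)‖ = 2 := by norm_num
    rw [h2]; nlinarith
  calc ‖_ + _‖ ≤ _ + _ := norm_add_le _ _
    _ ≤ 2 * |b| + a^2 := add_le_add h1 h2

lemma aux_norm_exp_eq_one (s r : ℝ) : ‖Complex.exp (2*Real.pi*Complex.I*((s:ℂ)*(r:ℂ)^2))‖ = 1 := by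
  rw [Complex.norm_exp]
  have : (2*(Real.pi:ℂ)*Complex.I*((s:ℂ)*(r:ℂ)^2)).re = 0 := by
    simp [Complex.mul_re, Complex.mul_im, pow_two]
  rw [this, Real.exp_zero]

lemma aux_pointwise (s n u : ℝ) :
    ‖Complex.exp (2*Real.pi*Complex.I*((s:ℂ)*((n:ℝ)+u:ℝ)^2))
      + Complex.exp (2*Real.pi*Complex.I*((s:ℂ)*((n:ℝ)-u:ℝ)^2))
      - 2*Complex.exp (2*Real.pi*Complex.I*((s:ℂ)*(n:ℂ)^2))‖
    ≤ 4*Real.pi*|s| * u^2 + 16*Real.pi^2*s^2*n^2*u^2 := by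
  set b : ℝ := 2*Real.pi*s*u^2 with hb
  set a : ℝ := 4*Real.pi*s*n*u with ha
  have e1 : Complex.exp (2*Real.pi*Complex.I*((s:ℂ)*((n:ℝ)+u:ℝ)^2))
      = Complex.exp (2*Real.pi*Complex.I*((s:ℂ)*(n:ℂ)^2)) * Complex.exp ((b:ℂ)*Complex.I)
        * Complex.exp ((a:ℂ)*Complex.I) := by
    rw [← Complex.exp_add, ← Complex.exp_add]
    congr 1
    push_cast [hb, ha]
    ring
  have e2 : Complex.exp (2*Real.pi*Complex.I*((s:ℂ)*((n:ℝ)-u:ℝ)^2))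
      = Complex.exp (2*Real.pi*Complex.I*((s:ℂ)*(n:ℂ)^2)) * Complex.exp ((b:ℂ)*Complex.I)
        * Complex.exp (((-a:ℝ):ℂ)*Complex.I) := by
    rw [← Complex.exp_add, ← Complex.exp_add]
    congr 1
    push_cast [hb, ha]
    ring
  have ecos : Complex.exp ((a:ℂ)*Complex.I) + Complex.exp (((-a:ℝ):ℂ)*Complex.I)
      = 2*(Real.cos a : ℂ) := by
    rw [Complex.exp_mul_I, Complex.exp_mul_I]
    push_cast
    rw [Complex.cos_neg, Complex.sin_neg]
    ring
  have hfac : Complex.exp (2*Real.pi*Complex.I*((s:ℂ)*((n:ℝ)+u:ℝ)^2))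
      + Complex.exp (2*Real.pi*Complex.I*((s:ℂ)*((n:ℝ)-u:ℝ)^2))
      - 2*Complex.exp (2*Real.pi*Complex.I*((s:ℂ)*(n:ℂ)^2))
      = Complex.exp (2*Real.pi*Complex.I*((s:ℂ)*(n:ℂ)^2))
        * (Complex.exp ((b:ℂ)*Complex.I) * (2*(Real.cos a : ℂ)) - 2) := by
    rw [e1, e2, ← ecos]; ring
  rw [hfac, norm_mul, aux_norm_exp_eq_one, one_mul]
  calc ‖Complex.exp ((b:ℂ)*Complex.I) * (2*(Real.cos a : ℂ)) - 2‖ ≤ 2 * |b| + a^2 := aux_key a b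
    _ ≤ 4*Real.pi*|s| * u^2 + 16*Real.pi^2*s^2*n^2*u^2 := by
        have h1 : |b| = 2*Real.pi*|s| * u^2 := by
          rw [hb, abs_mul, abs_mul, abs_of_nonneg (by positivity : (0:ℝ) ≤ 2*Real.pi),
            abs_of_nonneg (sq_nonneg u)]
        have h2 : a^2 = 16*Real.pi^2*s^2*n^2*u^2 := by rw [ha]; ring
        rw [h1, h2]; ring_nf
        exact le_refl _

lemma aux_step (s n : ℝ) :
    ‖Complex.exp (2*Real.pi*Complex.I*((s:ℂ)*(n:ℂ)^2))
      - ∫ y in (n-1/2)..(n+1/2), Complex.exp (2*Real.pi*Complex.I*((s:ℂ)*(y:ℂ)^2))‖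
    ≤ Real.pi*|s| + 4*Real.pi^2*s^2*n^2 := by
  set E : ℝ → ℂ := fun y => Complex.exp (2*Real.pi*Complex.I*((s:ℂ)*(y:ℂ)^2)) with hE
  have hcont : Continuous E := by
    apply Complex.continuous_exp.comp
    fun_prop
  have hInt : ∀ a b : ℝ, IntervalIntegrable E volume a b := fun a b =>
    hcont.intervalIntegrable a b
  set g : ℝ → ℂ := fun u => E (u + n) - E n with hg
  have hgcont : Continuous g := by fun_prop
  have hgInt : ∀ a b : ℝ, IntervalIntegrable g volume a b := fun a b =>
    hgcont.intervalIntegrable a b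
  have h1 : (∫ y in (n-1/2)..(n+1/2), E y) - E n
      = ∫ y in (n-1/2)..(n+1/2), (E y - E n) := by
    rw [intervalIntegral.integral_sub (hInt _ _) (intervalIntegrable_const)]
    rw [intervalIntegral.integral_const]
    norm_num
  have h2 : (∫ y in (n-1/2)..(n+1/2), (E y - E n)) = ∫ u in (-(1/2):ℝ)..(1/2), g u := by
    have h := intervalIntegral.integral_comp_add_right
      (a := -(1/2:ℝ)) (b := (1/2:ℝ)) (fun y => E y - E n) n
    rw [show (-(1/2:ℝ)+n) = n - 1/2 by ring, show ((1/2:ℝ)+n) = n + 1/2 by ring] at h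
    rw [← h]
  have h3 : (∫ u in (-(1/2):ℝ)..(1/2), g u)
      = (∫ u in (0:ℝ)..(1/2), g (-u)) + ∫ u in (0:ℝ)..(1/2), g u := by
    have hadd := intervalIntegral.integral_add_adjacent_intervals
      (a := -(1/2:ℝ)) (b := (0:ℝ)) (c := (1/2:ℝ)) (hgInt _ _) (hgInt _ _)
    have hneg := intervalIntegral.integral_comp_neg (a := (0:ℝ)) (b := (1/2:ℝ)) g
    rw [neg_zero] at hneg
    rw [← hadd, hneg]
  have h4 : ((∫ u in (0:ℝ)..(1/2), g (-u)) + ∫ u in (0:ℝ)..(1/2), g u)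
      = ∫ u in (0:ℝ)..(1/2), (g (-u) + g u) := by
    have hIntNeg : IntervalIntegrable (fun u => g (-u)) volume 0 (1/2) :=
      (hgcont.comp continuous_neg).intervalIntegrable _ _
    rw [intervalIntegral.integral_add hIntNeg (hgInt _ _)]
  have key : E n - (∫ y in (n-1/2)..(n+1/2), E y)
      = -∫ u in (0:ℝ)..(1/2), (g (-u) + g u) := by
    rw [← h4, ← h3, ← h2, ← h1]; ring
  rw [key, norm_neg]
  have hptw : ∀ u ∈ Set.uIoc (0:ℝ) (1/2), ‖g (-u) + g u‖ ≤ Real.pi*|s| + 4*Real.pi^2*s^2*n^2 := by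
    intro u hu
    rw [Set.uIoc_of_le (by norm_num : (0:ℝ) ≤ 1/2)] at hu
    have hu1 : 0 < u := hu.1
    have hu2 : u ≤ 1/2 := hu.2
    have husq : u^2 ≤ 1/4 := by nlinarith
    have := aux_pointwise s n u
    have harg : g (-u) + g u = Complex.exp (2*Real.pi*Complex.I*((s:ℂ)*((n:ℝ)+u:ℝ)^2))
        + Complex.exp (2*Real.pi*Complex.I*((s:ℂ)*((n:ℝ)-u:ℝ)^2))
        - 2*Complex.exp (2*Real.pi*Complex.I*((s:ℂ)*(n:ℂ)^2)) := by
      simp only [hg, hE]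
      rw [show -u + n = (n:ℝ) - u by ring, show u + n = (n:ℝ) + u by ring]
      push_cast
      ring
    rw [harg]
    calc _ ≤ 4*Real.pi*|s| * u^2 + 16*Real.pi^2*s^2*n^2*u^2 := this
      _ ≤ Real.pi*|s| + 4*Real.pi^2*s^2*n^2 := by
          have t1 : 4*Real.pi*|s| * u^2 ≤ Real.pi*|s| := by
            nlinarith [mul_nonneg Real.pi_pos.le (abs_nonneg s)]
          have t2 : 16*Real.pi^2*s^2*n^2*u^2 ≤ 4*Real.pi^2*s^2*n^2 := by
            nlinarith [sq_nonneg (Real.pi*s*n)]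
          linarith
  calc ‖∫ u in (0:ℝ)..(1/2), (g (-u) + g u)‖
      ≤ (Real.pi*|s| + 4*Real.pi^2*s^2*n^2) * |((1:ℝ)/2) - 0| :=
        intervalIntegral.norm_integral_le_of_norm_le_const hptw
    _ ≤ Real.pi*|s| + 4*Real.pi^2*s^2*n^2 := by
        rw [show |((1:ℝ)/2) - 0| = 1/2 by norm_num]
        have hC : 0 ≤ Real.pi*|s| + 4*Real.pi^2*s^2*n^2 := by positivity
        linarith


lemma aux_tendsto (c r : ℝ) (hr : 0 < r) :
    Filter.Tendsto (fun X:ℝ => c * (Real.log X / X^r)) Filter.atTop (nhds 0) := by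
  have h := (isLittleO_log_rpow_atTop hr).tendsto_div_nhds_zero
  simpa using h.const_mul c

lemma aux_ev1 (K : ℝ) :
    ∀ᶠ X in Filter.atTop, Real.sqrt X * (Real.pi*(K*(X^(-12/13:ℝ)*Real.log X))) ≤ 1 := by
  have h := (aux_tendsto (Real.pi*K) (11/26) (by norm_num)).eventually
    (eventually_le_nhds (by norm_num : (0:ℝ) < 1))
  filter_upwards [h, Filter.eventually_ge_atTop (1:ℝ)] with X h1 hX1
  have hX0 : (0:ℝ) < X := by linarith
  have heq : Real.sqrt X * (Real.pi*(K*(X^(-12/13:ℝ)*Real.log X)))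
      = Real.pi*K * (Real.log X / X^(11/26:ℝ)) := by
    have e : X^((1:ℝ)/2) * X^((-12/13):ℝ) = X^((-(11/26)):ℝ) := by
      rw [← Real.rpow_add hX0]; norm_num
    calc Real.sqrt X * (Real.pi*(K*(X^(-12/13:ℝ)*Real.log X)))
        = Real.pi*K*Real.log X*(X^((1:ℝ)/2) * X^((-12/13):ℝ)) := by
          rw [Real.sqrt_eq_rpow]; ring
      _ = Real.pi*K*Real.log X * X^((-(11/26)):ℝ) := by rw [e]
      _ = Real.pi*K * (Real.log X / X^((11/26):ℝ)) := by
          rw [Real.rpow_neg hX0.le]; ring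
  rw [heq]
  exact h1

lemma aux_ev2 (K : ℝ) :
    ∀ᶠ X in Filter.atTop, Real.sqrt X * (4*Real.pi^2*(K*(X^(-12/13:ℝ)*Real.log X))^2*X) ≤ 1 := by
  have hbase := (isLittleO_log_rpow_atTop (show (0:ℝ) < 9/52 by norm_num)).tendsto_div_nhds_zero
  have hsq : Filter.Tendsto (fun X:ℝ => (4*Real.pi^2*K^2) *
      ((Real.log X / X^(9/52:ℝ)) * (Real.log X / X^(9/52:ℝ)))) Filter.atTop (nhds 0) := by
    simpa using ((hbase.mul hbase).const_mul (4*Real.pi^2*K^2))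
  have h := hsq.eventually (eventually_le_nhds (by norm_num : (0:ℝ) < 1))
  filter_upwards [h, Filter.eventually_ge_atTop (1:ℝ)] with X h1 hX1
  have hX0 : (0:ℝ) < X := by linarith
  have heq : Real.sqrt X * (4*Real.pi^2*(K*(X^(-12/13:ℝ)*Real.log X))^2*X)
      = (4*Real.pi^2*K^2) * ((Real.log X / X^(9/52:ℝ)) * (Real.log X / X^(9/52:ℝ))) := by
    have e1 : X^(-(9/52):ℝ) * X^(-(9/52):ℝ) = X^(-(9/26):ℝ) := by
      rw [← Real.rpow_add hX0]; norm_num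
    have e2 : X^((1:ℝ)/2) * (X^(-12/13:ℝ) * X^(-12/13:ℝ)) * X = X^(-(9/26):ℝ) := by
      have h3 : X^((1:ℝ)/2) * (X^(-12/13:ℝ) * X^(-12/13:ℝ)) * X^(1:ℝ) = X^(-(9/26):ℝ) := by
        rw [← Real.rpow_add hX0, ← Real.rpow_add hX0, ← Real.rpow_add hX0]
        norm_num
      rw [Real.rpow_one] at h3
      exact h3
    calc Real.sqrt X * (4*Real.pi^2*(K*(X^(-12/13:ℝ)*Real.log X))^2*X)
        = (4*Real.pi^2*K^2) * (Real.log X * Real.log X)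
          * (X^((1:ℝ)/2) * (X^(-12/13:ℝ) * X^(-12/13:ℝ)) * X) := by
          rw [Real.sqrt_eq_rpow]; ring
      _ = (4*Real.pi^2*K^2) * (Real.log X * Real.log X) * (X^(-(9/52):ℝ) * X^(-(9/52):ℝ)) := by
          rw [e1, e2]
      _ = _ := by
          rw [Real.rpow_neg hX0.le]; ring
  rw [heq]
  exact h1

lemma aux_ev3 (lam₀ : ℝ) (h0 : 0 < lam₀) (h1 : lam₀ < 1) :
    ∀ᶠ X in Filter.atTop, Real.sqrt (lam₀ * X) + 2 ≤ Real.sqrt X := by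
  have hs1 : Real.sqrt lam₀ < 1 := by
    rw [show (1:ℝ) = Real.sqrt 1 from Real.sqrt_one.symm]
    exact Real.sqrt_lt_sqrt h0.le h1
  set c : ℝ := 2 / (1 - Real.sqrt lam₀) with hc
  have hc0 : 0 < c := by
    apply div_pos (by norm_num)
    linarith
  filter_upwards [Filter.eventually_ge_atTop (max 0 (c^2))] with X hX
  have hX0 : (0:ℝ) ≤ X := le_trans (le_max_left _ _) hX
  have hcX : c ≤ Real.sqrt X := by
    have := Real.sqrt_le_sqrt (le_trans (le_max_right _ _) hX)
    rwa [Real.sqrt_sq hc0.le] at this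
  have hmul : Real.sqrt (lam₀ * X) = Real.sqrt lam₀ * Real.sqrt X := Real.sqrt_mul h0.le X
  rw [hmul]
  have h2 : (1 - Real.sqrt lam₀) * Real.sqrt X ≥ 2 := by
    calc (1 - Real.sqrt lam₀) * Real.sqrt X ≥ (1 - Real.sqrt lam₀) * c := by
          apply mul_le_mul_of_nonneg_left hcX (by linarith)
      _ = 2 := by
          rw [hc, mul_div_assoc', mul_comm, mul_div_assoc]
          rw [div_self (by linarith : (1 - Real.sqrt lam₀) ≠ 0), mul_one]
  linarith

lemma aux_ev4 (lam₀ : ℝ) (h0 : 0 < lam₀) : ∀ᶠ X in Filter.atTop, 1 ≤ lam₀ * X := by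
  filter_upwards [Filter.eventually_ge_atTop (1/lam₀)] with X hX
  rw [div_le_iff₀ h0] at hX
  linarith

end AuxLemmas

/-- `U(t) = ∑_{λ₀X < n² ≤ X} e(t n²)`, sum over positive integers. -/
noncomputable def U (lam₀ X t : ℝ) : ℂ :=
  ∑ n ∈ Finset.Icc 1 (Nat.floor X),
    if lam₀ * X < (n : ℝ) ^ 2 ∧ (n : ℝ) ^ 2 ≤ X then
      Complex.exp (2 * Real.pi * Complex.I * (t * (n : ℝ) ^ 2))
    else 0

/-- The integral `I₂(t) = ∫_{(λ₀X)^{1/2}}^{X^{1/2}} e(t y²) dy`. -/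
noncomputable def I2 (lam₀ X t : ℝ) : ℂ :=
  ∫ y in ((lam₀ * X) ^ ((1:ℝ)/2))..(X ^ ((1:ℝ)/2)),
    Complex.exp (2 * Real.pi * Complex.I * (t * y ^ 2))


lemma U_eq (lam₀ X s : ℝ) (h0 : 0 < lam₀) (hX1 : 1 ≤ lam₀ * X) (hX : 1 ≤ X) :
    U lam₀ X s = ∑ n ∈ Finset.Icc (Nat.floor (Real.sqrt (lam₀*X)) + 1) (Nat.floor (Real.sqrt X)),
      Complex.exp (2*Real.pi*Complex.I*((s:ℂ)*((n:ℕ):ℂ)^2)) := by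
  unfold U
  rw [← Finset.sum_filter]
  apply Finset.sum_congr
  · ext n
    simp only [Finset.mem_filter, Finset.mem_Icc]
    constructor
    · rintro ⟨⟨h1n, hnX⟩, hlow, hhigh⟩
      have hn0 : (0:ℝ) ≤ n := Nat.cast_nonneg n
      constructor
      · have hAn : Real.sqrt (lam₀*X) < n := by
          have := Real.sqrt_lt_sqrt (by positivity) hlow
          rwa [Real.sqrt_sq hn0] at this
        exact Nat.floor_lt (Real.sqrt_nonneg _) |>.mpr hAn
      · apply Nat.le_floor
        have := Real.sqrt_le_sqrt hhigh
        rwa [Real.sqrt_sq hn0] at this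
    · rintro ⟨hlo, hhi⟩
      have hAn : Real.sqrt (lam₀*X) < n := (Nat.floor_lt (Real.sqrt_nonneg _)).mp hlo
      have hnB : (n:ℝ) ≤ Real.sqrt X := by
        calc (n:ℝ) ≤ (Nat.floor (Real.sqrt X) : ℝ) := by exact_mod_cast hhi
          _ ≤ Real.sqrt X := Nat.floor_le (Real.sqrt_nonneg _)
      have h1A : (1:ℝ) ≤ Real.sqrt (lam₀*X) := by
        rw [show (1:ℝ) = Real.sqrt 1 by simp]
        exact Real.sqrt_le_sqrt hX1
      have hn1 : (1:ℝ) < n := lt_of_le_of_lt h1A hAn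
      have hlow : lam₀ * X < (n:ℝ)^2 := by
        have := Real.sq_sqrt (by positivity : (0:ℝ) ≤ lam₀*X)
        nlinarith [Real.sqrt_nonneg (lam₀*X)]
      have hhigh : (n:ℝ)^2 ≤ X := by
        have := Real.sq_sqrt (le_trans (by norm_num) hX : (0:ℝ) ≤ X)
        nlinarith [Real.sqrt_nonneg X]
      refine ⟨⟨?_, ?_⟩, hlow, hhigh⟩
      · exact_mod_cast Nat.one_lt_cast.mp (by exact_mod_cast hn1) |>.le
      · apply Nat.le_floor
        nlinarith
  · intro n _
    norm_num
lemma sqrt_rpow_half (x : ℝ) (hx : 0 ≤ x) : x ^ ((1:ℝ)/2) = Real.sqrt x := by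
  rw [Real.sqrt_eq_rpow]

lemma UI_bound (lam₀ X s : ℝ) (h0 : 0 < lam₀) (hX1 : 1 ≤ lam₀ * X) (hX : 1 ≤ X)
    (hgap : Real.sqrt (lam₀*X) + 2 ≤ Real.sqrt X) :
    ‖U lam₀ X s - I2 lam₀ X s‖
      ≤ 2 + Real.sqrt X * (Real.pi*|s| + 4*Real.pi^2*s^2*X) := by
  set A : ℝ := Real.sqrt (lam₀*X) with hA
  set B : ℝ := Real.sqrt X with hB
  have hA0 : 0 ≤ A := Real.sqrt_nonneg _
  have hB0 : 0 ≤ B := Real.sqrt_nonneg _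
  set N1 : ℕ := Nat.floor A + 1 with hN1
  set N2 : ℕ := Nat.floor B with hN2
  set E : ℝ → ℂ := fun y => Complex.exp (2*Real.pi*Complex.I*((s:ℂ)*(y:ℂ)^2)) with hE
  have hcont : Continuous E := by
    apply Complex.continuous_exp.comp
    fun_prop
  have hInt : ∀ a b : ℝ, IntervalIntegrable E volume a b := fun a b =>
    hcont.intervalIntegrable a b
  -- floor facts
  have hAN1 : A < N1 := by rw [hN1]; push_cast; exact Nat.lt_floor_add_one A
  have hN1A : (N1:ℝ) ≤ A + 1 := by rw [hN1]; push_cast; have := Nat.floor_le hA0; linarith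
  have hN2B : (N2:ℝ) ≤ B := Nat.floor_le hB0
  have hBN2 : B < (N2:ℝ) + 1 := Nat.lt_floor_add_one B
  have hN12 : N1 ≤ N2 := by
    have : (N1:ℝ) ≤ (N2:ℝ) := by
      have : (N1:ℝ) ≤ A + 1 := hN1A
      nlinarith
    exact_mod_cast this
  -- U as a clean sum
  rw [U_eq lam₀ X s h0 hX1 hX]
  have hI2 : I2 lam₀ X s = ∫ y in A..B, E y := by
    unfold I2
    simp only [hA, hB, Real.sqrt_eq_rpow, hE]
  rw [hI2]
  -- telescoping the adjacent intervals
  set m : ℕ := N2 + 1 - N1 with hm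
  set a : ℕ → ℝ := fun k => (N1:ℝ) - 1/2 + k with ha
  have hadj : ∑ k ∈ Finset.range m, (∫ y in (a k)..(a (k+1)), E y) = ∫ y in (a 0)..(a m), E y :=
    intervalIntegral.sum_integral_adjacent_intervals (fun k _ => hInt _ _)
  have hre : ∑ n ∈ Finset.Icc N1 N2, (∫ y in ((n:ℝ)-1/2)..((n:ℝ)+1/2), E y)
      = ∑ k ∈ Finset.range m, (∫ y in (a k)..(a (k+1)), E y) := by
    rw [← Finset.Ico_add_one_right_eq_Icc, Finset.sum_Ico_eq_sum_range]
    apply Finset.sum_congr rfl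
    intro k _
    have e1 : ((N1 + k : ℕ) : ℝ) - 1/2 = a k := by push_cast [ha]; ring
    have e2 : ((N1 + k : ℕ) : ℝ) + 1/2 = a (k+1) := by push_cast [ha]; ring
    rw [e1, e2]
  -- decompose difference
  have hdecomp : (∑ n ∈ Finset.Icc N1 N2, E (n:ℝ)) - (∫ y in A..B, E y)
      = (∑ n ∈ Finset.Icc N1 N2, (E (n:ℝ) - ∫ y in ((n:ℝ)-1/2)..((n:ℝ)+1/2), E y))
        + ((∫ y in (a 0)..A, E y) + (∫ y in B..(a m), E y)) := by
    have hsplit : ∫ y in (a 0)..(a m), E y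
        = (∫ y in (a 0)..A, E y) + (∫ y in A..B, E y) + (∫ y in B..(a m), E y) := by
      rw [intervalIntegral.integral_add_adjacent_intervals (hInt (a 0) A) (hInt A B)]
      rw [intervalIntegral.integral_add_adjacent_intervals (hInt (a 0) B) (hInt B (a m))]
    rw [Finset.sum_sub_distrib, hre, hadj, hsplit]
    ring
  have hU : ∑ n ∈ Finset.Icc N1 N2, Complex.exp (2*Real.pi*Complex.I*((s:ℂ)*((n:ℕ):ℂ)^2))
      = ∑ n ∈ Finset.Icc N1 N2, E (n:ℝ) := by
    apply Finset.sum_congr rfl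
    intro n _
    simp [hE]
  rw [hU, hdecomp]
  -- bound the three pieces
  have hbd1 : ‖∑ n ∈ Finset.Icc N1 N2, (E (n:ℝ) - ∫ y in ((n:ℝ)-1/2)..((n:ℝ)+1/2), E y)‖
      ≤ B * (Real.pi*|s| + 4*Real.pi^2*s^2*X) := by
    calc ‖∑ n ∈ Finset.Icc N1 N2, (E (n:ℝ) - ∫ y in ((n:ℝ)-1/2)..((n:ℝ)+1/2), E y)‖
        ≤ ∑ n ∈ Finset.Icc N1 N2, ‖E (n:ℝ) - ∫ y in ((n:ℝ)-1/2)..((n:ℝ)+1/2), E y‖ :=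
          norm_sum_le _ _
      _ ≤ ∑ n ∈ Finset.Icc N1 N2, (Real.pi*|s| + 4*Real.pi^2*s^2*X) := by
          apply Finset.sum_le_sum
          intro n hn
          have hbound := aux_step s (n:ℝ)
          have hn2X : ((n:ℝ))^2 ≤ X := by
            have hnN2 : (n:ℝ) ≤ B := by
              rw [Finset.mem_Icc] at hn
              calc (n:ℝ) ≤ (N2:ℝ) := by exact_mod_cast hn.2
                _ ≤ B := hN2B
            have hBX : B^2 = X := Real.sq_sqrt (by linarith : (0:ℝ) ≤ X)
            nlinarith [Nat.cast_nonneg (α := ℝ) n]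
          calc ‖E (n:ℝ) - ∫ y in ((n:ℝ)-1/2)..((n:ℝ)+1/2), E y‖
              ≤ Real.pi*|s| + 4*Real.pi^2*s^2*(n:ℝ)^2 := hbound
            _ ≤ Real.pi*|s| + 4*Real.pi^2*s^2*X := by nlinarith [sq_nonneg (Real.pi*s)]
      _ = (Finset.Icc N1 N2).card * (Real.pi*|s| + 4*Real.pi^2*s^2*X) := by
          rw [Finset.sum_const, nsmul_eq_mul]
      _ ≤ B * (Real.pi*|s| + 4*Real.pi^2*s^2*X) := by
          apply mul_le_mul_of_nonneg_right _ (by positivity)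
          rw [Nat.card_Icc]
          have hcard : (N2 + 1 - N1 : ℕ) ≤ N2 := by omega
          calc ((N2 + 1 - N1 : ℕ) : ℝ) ≤ (N2:ℝ) := by exact_mod_cast hcard
            _ ≤ B := hN2B
  have hnorm1 : ∀ r : ℝ, ‖Complex.exp (2*Real.pi*Complex.I*((s:ℂ)*(r:ℂ)^2))‖ = 1 := by
    intro r
    rw [Complex.norm_exp]
    have : (2*(Real.pi:ℂ)*Complex.I*((s:ℂ)*(r:ℂ)^2)).re = 0 := by
      simp [Complex.mul_re, Complex.mul_im, pow_two]
    rw [this, Real.exp_zero]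
  have hbd2 : ‖∫ y in (a 0)..A, E y‖ ≤ 1 := by
    calc ‖∫ y in (a 0)..A, E y‖ ≤ 1 * |A - a 0| := by
          apply intervalIntegral.norm_integral_le_of_norm_le_const
          intro y _
          exact le_of_eq (hnorm1 y)
      _ ≤ 1 := by
          rw [one_mul, abs_le]
          have ha0 : a 0 = (N1:ℝ) - 1/2 := by simp [ha]
          rw [ha0]
          constructor <;> linarith
  have ham : a m = (N2:ℝ) + 1/2 := by
    have hcast : ((m:ℕ):ℝ) = (N2:ℝ) + 1 - (N1:ℝ) := by
      rw [hm]
      push_cast [Nat.cast_sub (by omega : N1 ≤ N2 + 1)]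
      ring
    simp only [ha]
    rw [hcast]
    ring
  have hbd3 : ‖∫ y in B..(a m), E y‖ ≤ 1 := by
    calc ‖∫ y in B..(a m), E y‖ ≤ 1 * |a m - B| := by
          apply intervalIntegral.norm_integral_le_of_norm_le_const
          intro y _
          exact le_of_eq (hnorm1 y)
      _ ≤ 1 := by
          rw [one_mul, abs_le, ham]
          constructor <;> linarith
  calc ‖(∑ n ∈ Finset.Icc N1 N2, (E (n:ℝ) - ∫ y in ((n:ℝ)-1/2)..((n:ℝ)+1/2), E y))
        + ((∫ y in (a 0)..A, E y) + (∫ y in B..(a m), E y))‖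
      ≤ ‖∑ n ∈ Finset.Icc N1 N2, (E (n:ℝ) - ∫ y in ((n:ℝ)-1/2)..((n:ℝ)+1/2), E y)‖
        + (‖∫ y in (a 0)..A, E y‖ + ‖∫ y in B..(a m), E y‖) := by
        calc _ ≤ _ := norm_add_le _ _
          _ ≤ _ := by gcongr; exact norm_add_le _ _
    _ ≤ B * (Real.pi*|s| + 4*Real.pi^2*s^2*X) + (1 + 1) := by gcongr
    _ = 2 + B * (Real.pi*|s| + 4*Real.pi^2*s^2*X) := by ring

lemma S1_bound (γ lam₀ X t : ℝ) (hγ0 : 0 < γ) (hγ1 : γ < 1) (hX : 1 ≤ X) :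
    ‖S1 γ lam₀ X t‖ ≤ 2 * X * Real.log X := by
  have hX0 : (0:ℝ) < X := lt_of_lt_of_le one_pos hX
  have hlogX : 0 ≤ Real.log X := Real.log_nonneg hX
  set P : ℕ → Prop := fun p =>
    Nat.Prime p ∧ lam₀ * X < (p : ℝ) ∧ (∃ n : ℕ, 0 < n ∧ p = Nat.floor ((n : ℝ) ^ (1/γ)))
    with hP
  set Bd : ℝ := X ^ (1 - γ) * Real.log X with hBd
  have hBd0 : 0 ≤ Bd := by
    apply mul_nonneg (Real.rpow_nonneg hX0.le _) hlogX
  -- term bound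
  have hterm : ∀ p ∈ Finset.Icc 1 (Nat.floor X),
      ‖if P p then
        (((p : ℝ) ^ (1 - γ) * Real.log p : ℝ) : ℂ) *
          Complex.exp (2 * Real.pi * Complex.I * ((t:ℂ) * (p:ℕ))) else 0‖
      ≤ if P p then Bd else 0 := by
    intro p hp
    rw [Finset.mem_Icc] at hp
    by_cases hPp : P p
    · rw [if_pos hPp, if_pos hPp]
      have hp1 : (1:ℝ) ≤ (p:ℝ) := by exact_mod_cast hp.1
      have hpX : (p:ℝ) ≤ X := by
        calc (p:ℝ) ≤ (Nat.floor X : ℝ) := by exact_mod_cast hp.2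
          _ ≤ X := Nat.floor_le hX0.le
      have hexp : ‖Complex.exp (2 * Real.pi * Complex.I * ((t:ℂ) * (p:ℕ)))‖ = 1 := by
        rw [Complex.norm_exp]
        have : (2 * (Real.pi:ℂ) * Complex.I * ((t:ℂ) * ((p:ℕ):ℂ))).re = 0 := by
          simp [Complex.mul_re, Complex.mul_im]
        rw [this, Real.exp_zero]
      rw [norm_mul, hexp, mul_one, Complex.norm_real, Real.norm_eq_abs]
      rw [abs_of_nonneg (mul_nonneg (Real.rpow_nonneg (by positivity) _)
        (Real.log_nonneg hp1))]
      apply mul_le_mul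
      · exact Real.rpow_le_rpow (by positivity) hpX (by linarith)
      · exact Real.log_le_log (by linarith) hpX
      · exact Real.log_nonneg hp1
      · exact Real.rpow_nonneg hX0.le _
    · rw [if_neg hPp, if_neg hPp, norm_zero]
  -- cardinality of support
  have hcard : ((Finset.Icc 1 (Nat.floor X)).filter P).card
      ≤ (Finset.Icc 1 (Nat.floor ((X+1) ^ γ))).card := by
    refine Finset.card_le_card_of_surjOn (fun n => Nat.floor ((n : ℝ) ^ (1/γ))) ?_
    intro p hp
    simp only [Finset.coe_filter, Set.mem_setOf_eq] at hp
    obtain ⟨hpIcc, hPp⟩ := hp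
    obtain ⟨hprime, hlam, n, hn0, hpn⟩ := hPp
    rw [Finset.mem_Icc] at hpIcc
    have hn1R : (1:ℝ) ≤ (n:ℝ) := by exact_mod_cast hn0
    have hrpow0 : (0:ℝ) ≤ (n:ℝ) ^ (1/γ) := Real.rpow_nonneg (by positivity) _
    have hplt : ((n:ℝ) ^ (1/γ)) < (p:ℝ) + 1 := by
      rw [hpn]; push_cast; exact Nat.lt_floor_add_one _
    have hpX : (p:ℝ) ≤ X := by
      calc (p:ℝ) ≤ (Nat.floor X : ℝ) := by exact_mod_cast hpIcc.2
        _ ≤ X := Nat.floor_le (by linarith)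
    have hnX : (n:ℝ) < (X+1) ^ γ := by
      have h1 : ((n:ℝ) ^ (1/γ)) ^ γ < ((X:ℝ)+1) ^ γ :=
        Real.rpow_lt_rpow hrpow0 (by linarith) hγ0
      have hid : ((n:ℝ) ^ ((1:ℝ)/γ)) ^ γ = (n:ℝ) := by
        rw [← Real.rpow_mul (by positivity : (0:ℝ) ≤ (n:ℝ)),
          show (1:ℝ)/γ * γ = 1 by field_simp, Real.rpow_one]
      rwa [hid] at h1
    refine ⟨n, ?_, hpn.symm⟩
    simp only [Finset.coe_Icc, Set.mem_Icc]
    exact ⟨hn0, Nat.le_floor hnX.le⟩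
  -- put it together
  have hM : ((Finset.Icc 1 (Nat.floor ((X+1) ^ γ))).card : ℝ) ≤ 2 * X ^ γ := by
    rw [Nat.card_Icc]
    have h1 : (Nat.floor ((X+1) ^ γ) + 1 - 1 : ℕ) = Nat.floor ((X+1) ^ γ) := by omega
    rw [h1]
    calc ((Nat.floor ((X+1) ^ γ) : ℕ) : ℝ) ≤ (X+1) ^ γ := Nat.floor_le (by positivity)
      _ ≤ (2*X) ^ γ := Real.rpow_le_rpow (by linarith) (by linarith) hγ0.le
      _ = 2 ^ γ * X ^ γ := Real.mul_rpow (by norm_num) hX0.le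
      _ ≤ 2 * X ^ γ := by
          apply mul_le_mul_of_nonneg_right _ (Real.rpow_nonneg hX0.le _)
          calc (2:ℝ) ^ γ ≤ 2 ^ (1:ℝ) :=
            Real.rpow_le_rpow_of_exponent_le (by norm_num) hγ1.le
            _ = 2 := Real.rpow_one 2
  calc ‖S1 γ lam₀ X t‖ ≤ ∑ p ∈ Finset.Icc 1 (Nat.floor X), (if P p then Bd else 0) := by
        unfold S1
        refine le_trans (norm_sum_le _ _) (Finset.sum_le_sum ?_)
        exact hterm
    _ = ((Finset.Icc 1 (Nat.floor X)).filter P).card * Bd := by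
        rw [← Finset.sum_filter, Finset.sum_const, nsmul_eq_mul]
    _ ≤ (((Finset.Icc 1 (Nat.floor ((X+1) ^ γ))).card : ℝ)) * Bd := by
        apply mul_le_mul_of_nonneg_right _ hBd0
        exact_mod_cast hcard
    _ ≤ (2 * X ^ γ) * Bd := mul_le_mul_of_nonneg_right hM hBd0
    _ = 2 * (X ^ γ * X ^ (1-γ)) * Real.log X := by rw [hBd]; ring
    _ = 2 * X * Real.log X := by
        rw [← Real.rpow_add hX0, show γ + (1-γ) = 1 by ring, Real.rpow_one]

/-- `∫_{-Δ}^{Δ} |S₁(λ₁t)| |S₁(λ₂t)| |U(λ₃t) - I₂(λ₃t)| dt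
≪ Δ X² log³ X`, with `Δ = X^{-12/13} log X`. -/
theorem J2_bound (γ lam₀ lam₁ lam₂ lam₃ : ℝ) (hγ : 63/64 < γ) (hγ1 : γ < 1)
    (h0 : 0 < lam₀) (h1 : lam₀ < 1)
    (hlam₁ : lam₁ ≠ 0) (hlam₂ : lam₂ ≠ 0) (hlam₃ : lam₃ ≠ 0) :
    ∃ C > 0, ∃ X₀ : ℝ, ∀ X ≥ X₀,
      (∫ t in (-(X ^ (-12/13 : ℝ) * Real.log X))..(X ^ (-12/13 : ℝ) * Real.log X),
        ‖S1 γ lam₀ X (lam₁ * t)‖ * ‖S1 γ lam₀ X (lam₂ * t)‖ *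
          ‖U lam₀ X (lam₃ * t) - I2 lam₀ X (lam₃ * t)‖) ≤
        C * (X ^ (-12/13 : ℝ) * Real.log X) * X ^ 2 * (Real.log X) ^ 3 := by
  have hγ0 : 0 < γ := lt_trans (by norm_num) hγ
  refine ⟨32, by norm_num, ?_⟩
  have hev : ∀ᶠ X in Filter.atTop,
      (∫ t in (-(X ^ (-12/13 : ℝ) * Real.log X))..(X ^ (-12/13 : ℝ) * Real.log X),
        ‖S1 γ lam₀ X (lam₁ * t)‖ * ‖S1 γ lam₀ X (lam₂ * t)‖ *
          ‖U lam₀ X (lam₃ * t) - I2 lam₀ X (lam₃ * t)‖) ≤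
        32 * (X ^ (-12/13 : ℝ) * Real.log X) * X ^ 2 * (Real.log X) ^ 3 := by
    filter_upwards [Filter.eventually_ge_atTop (3:ℝ), aux_ev4 lam₀ h0,
      aux_ev3 lam₀ h0 h1, aux_ev1 |lam₃|, aux_ev2 |lam₃|] with X hX3 hlamX hgap he1 he2
    set Δ : ℝ := X ^ (-12/13 : ℝ) * Real.log X with hΔ
    have hX1 : (1:ℝ) ≤ X := by linarith
    have hX0 : (0:ℝ) < X := by linarith
    have hlog1 : 1 ≤ Real.log X := by
      have he : Real.exp 1 ≤ 3 := by
        have := Real.exp_one_lt_d9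
        linarith
      calc (1:ℝ) = Real.log (Real.exp 1) := (Real.log_exp 1).symm
        _ ≤ Real.log X := Real.log_le_log (Real.exp_pos 1) (by linarith)
    have hΔ0 : 0 ≤ Δ := mul_nonneg (Real.rpow_nonneg hX0.le _) (by linarith)
    have hM : ∀ t ∈ Set.uIoc (-Δ) Δ,
        ‖‖S1 γ lam₀ X (lam₁ * t)‖ * ‖S1 γ lam₀ X (lam₂ * t)‖ *
          ‖U lam₀ X (lam₃ * t) - I2 lam₀ X (lam₃ * t)‖‖ ≤ 16 * (X^2 * (Real.log X)^3) := by
      intro t ht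
      rw [Set.uIoc_of_le (by linarith : -Δ ≤ Δ)] at ht
      have htΔ : |t| ≤ Δ := by
        rw [abs_le]; exact ⟨ht.1.le, ht.2⟩
      have hs : |lam₃ * t| ≤ |lam₃| * Δ := by
        rw [abs_mul]
        exact mul_le_mul_of_nonneg_left htΔ (abs_nonneg lam₃)
      have hUI : ‖U lam₀ X (lam₃ * t) - I2 lam₀ X (lam₃ * t)‖ ≤ 4 * Real.log X := by
        have hb := UI_bound lam₀ X (lam₃ * t) h0 hlamX hX1 hgap
        have hsqX : (0:ℝ) ≤ Real.sqrt X := Real.sqrt_nonneg X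
        have h1' : Real.sqrt X * (Real.pi * |lam₃ * t|) ≤ 1 := by
          calc Real.sqrt X * (Real.pi * |lam₃ * t|)
              ≤ Real.sqrt X * (Real.pi * (|lam₃| * Δ)) := by
                apply mul_le_mul_of_nonneg_left _ hsqX
                exact mul_le_mul_of_nonneg_left hs Real.pi_pos.le
            _ ≤ 1 := he1
        have h2' : Real.sqrt X * (4*Real.pi^2*(lam₃ * t)^2*X) ≤ 1 := by
          calc Real.sqrt X * (4*Real.pi^2*(lam₃ * t)^2*X)
              ≤ Real.sqrt X * (4*Real.pi^2*(|lam₃| * Δ)^2*X) := by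
                apply mul_le_mul_of_nonneg_left _ hsqX
                apply mul_le_mul_of_nonneg_right _ hX0.le
                apply mul_le_mul_of_nonneg_left _ (by positivity)
                rw [← sq_abs (lam₃*t)]
                exact pow_le_pow_left₀ (abs_nonneg _) hs 2
            _ ≤ 1 := he2
        have hsplit : Real.sqrt X * (Real.pi * |lam₃ * t| + 4*Real.pi^2*(lam₃ * t)^2*X)
            = Real.sqrt X * (Real.pi * |lam₃ * t|) + Real.sqrt X * (4*Real.pi^2*(lam₃ * t)^2*X) := by
          ring
        calc ‖U lam₀ X (lam₃ * t) - I2 lam₀ X (lam₃ * t)‖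
            ≤ 2 + Real.sqrt X * (Real.pi * |lam₃ * t| + 4*Real.pi^2*(lam₃ * t)^2*X) := hb
          _ ≤ 2 + (1 + 1) := by rw [hsplit]; linarith
          _ = 4 := by norm_num
          _ ≤ 4 * Real.log X := by nlinarith
      have hS1a := S1_bound γ lam₀ X (lam₁*t) hγ0 hγ1 hX1
      have hS1b := S1_bound γ lam₀ X (lam₂*t) hγ0 hγ1 hX1
      rw [Real.norm_eq_abs, abs_of_nonneg (by positivity)]
      have hXlog0 : (0:ℝ) ≤ 2*X*Real.log X := by nlinarith
      calc ‖S1 γ lam₀ X (lam₁ * t)‖ * ‖S1 γ lam₀ X (lam₂ * t)‖ *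
            ‖U lam₀ X (lam₃ * t) - I2 lam₀ X (lam₃ * t)‖
          ≤ (2*X*Real.log X) * (2*X*Real.log X) * (4*Real.log X) := by
            apply mul_le_mul _ hUI (norm_nonneg _) (by positivity)
            exact mul_le_mul hS1a hS1b (norm_nonneg _) hXlog0
        _ = 16 * (X^2*(Real.log X)^3) := by ring
    have hnorm := intervalIntegral.norm_integral_le_of_norm_le_const hM
    have habs : |Δ - (-Δ)| = 2*Δ := by
      rw [abs_of_nonneg (by linarith)]; ring
    have hle : (∫ t in (-Δ)..Δ,
        ‖S1 γ lam₀ X (lam₁ * t)‖ * ‖S1 γ lam₀ X (lam₂ * t)‖ *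
          ‖U lam₀ X (lam₃ * t) - I2 lam₀ X (lam₃ * t)‖)
        ≤ ‖∫ t in (-Δ)..Δ,
        ‖S1 γ lam₀ X (lam₁ * t)‖ * ‖S1 γ lam₀ X (lam₂ * t)‖ *
          ‖U lam₀ X (lam₃ * t) - I2 lam₀ X (lam₃ * t)‖‖ := by
      rw [Real.norm_eq_abs]; exact le_abs_self _
    calc (∫ t in (-Δ)..Δ,
        ‖S1 γ lam₀ X (lam₁ * t)‖ * ‖S1 γ lam₀ X (lam₂ * t)‖ *
          ‖U lam₀ X (lam₃ * t) - I2 lam₀ X (lam₃ * t)‖)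
        ≤ ‖∫ t in (-Δ)..Δ,
        ‖S1 γ lam₀ X (lam₁ * t)‖ * ‖S1 γ lam₀ X (lam₂ * t)‖ *
          ‖U lam₀ X (lam₃ * t) - I2 lam₀ X (lam₃ * t)‖‖ := hle
      _ ≤ 16 * (X^2 * (Real.log X)^3) * |Δ - (-Δ)| := hnorm
      _ = 32 * Δ * X ^ 2 * (Real.log X) ^ 3 := by rw [habs]; ring
  obtain ⟨X₀, hX₀⟩ := Filter.eventually_atTop.mp hev
  exact ⟨X₀, hX₀⟩
end
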